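/- Let P = (c_v)_{v ∈ V} be a finite family of points in ℝ² and let G be the unit disk graph on V, i.e. the simple graph in which distinct vertices u and v are adjacent if and only if dist(c_u, c_v) ≤ 1. Then G admits a 7-subcoloring; that is, χ_s(G) ≤ 7. -/

import Mathlib

/-- A `k`-subcoloring of a simple graph `G`: every color class induces a
disjoint union of cliques. -/
def IsSubcoloring {V : Type*} {k : ℕ} (G : SimpleGraph V) (μ : V → Fin k) : Prop :=
  ∀ u v w : V, μ u = μ v → μ v = μ w → G.Adj u v → G.Adj v w → u ≠ w → G.Adj u w

namespace UDG7

open Real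

/-- Centers of a triangular lattice with spacing `4/5`. -/
noncomputable def ctr (mn : ℤ × ℤ) : EuclideanSpace ℝ (Fin 2) :=
  WithLp.toLp 2 ![(4/5 : ℝ) * (mn.1 + mn.2 / 2), (4/5 : ℝ) * mn.2 * Real.sqrt 3 / 2]

lemma ctr_zero (mn : ℤ × ℤ) : ctr mn 0 = (4/5 : ℝ) * (mn.1 + mn.2 / 2) := by simp [ctr]
lemma ctr_one (mn : ℤ × ℤ) : ctr mn 1 = (4/5 : ℝ) * mn.2 * Real.sqrt 3 / 2 := by simp [ctr]

lemma dist2 (p q : EuclideanSpace ℝ (Fin 2)) :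
    dist p q = Real.sqrt ((p 0 - q 0)^2 + (p 1 - q 1)^2) := by
  rw [EuclideanSpace.dist_eq]
  congr 1
  rw [Fin.sum_univ_two]
  simp [Real.dist_eq, sq_abs]

noncomputable def uu (p : EuclideanSpace ℝ (Fin 2)) : ℝ := (5/4 : ℝ) * p 0
noncomputable def ww (p : EuclideanSpace ℝ (Fin 2)) : ℝ := p 1 / ((4/5 : ℝ) * Real.sqrt 3)

/-- First candidate lattice point (even sublattice). -/
noncomputable def cand1 (p : EuclideanSpace ℝ (Fin 2)) : ℤ × ℤ :=
  (round (uu p) - round (ww p), 2 * round (ww p))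

/-- Second candidate lattice point (odd sublattice). -/
noncomputable def cand2 (p : EuclideanSpace ℝ (Fin 2)) : ℤ × ℤ :=
  (round (uu p - 1/2) - round (ww p - 1/2), 2 * round (ww p - 1/2) + 1)

open Classical in
/-- Assignment of a point to a nearby lattice point. -/
noncomputable def F (p : EuclideanSpace ℝ (Fin 2)) : ℤ × ℤ :=
  if dist p (ctr (cand1 p)) ≤ dist p (ctr (cand2 p)) then cand1 p else cand2 p

/-- 7-coloring of the lattice. -/
def col (mn : ℤ × ℤ) : Fin 7 := ⟨((mn.1 + 3 * mn.2) % 7).toNat, by omega⟩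

lemma p0_eq (p : EuclideanSpace ℝ (Fin 2)) : p 0 = (4/5 : ℝ) * uu p := by
  unfold uu; ring

lemma p1_eq (p : EuclideanSpace ℝ (Fin 2)) : p 1 = (4/5 : ℝ) * Real.sqrt 3 * ww p := by
  unfold ww
  have h3 : Real.sqrt 3 ≠ 0 := by positivity
  field_simp

lemma sqrt3_sq : (Real.sqrt 3)^2 = 3 := Real.sq_sqrt (by norm_num)

lemma dist_cand1 (p : EuclideanSpace ℝ (Fin 2)) :
    dist p (ctr (cand1 p)) =
      Real.sqrt ((16/25) * ((uu p - round (uu p))^2 + 3 * (ww p - round (ww p))^2)) := by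
  have h0 : p 0 - ctr (cand1 p) 0 = (4/5 : ℝ) * (uu p - round (uu p)) := by
    rw [ctr_zero, p0_eq p]
    unfold cand1
    push_cast
    ring
  have h1 : p 1 - ctr (cand1 p) 1 = (4/5 : ℝ) * Real.sqrt 3 * (ww p - round (ww p)) := by
    rw [ctr_one, p1_eq p]
    unfold cand1
    push_cast
    ring
  rw [dist2, h0, h1]
  congr 1
  linear_combination (16/25 : ℝ) * (ww p - (round (ww p) : ℝ))^2 * sqrt3_sq

lemma dist_cand2 (p : EuclideanSpace ℝ (Fin 2)) :
    dist p (ctr (cand2 p)) =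
      Real.sqrt ((16/25) * (((uu p - 1/2) - round (uu p - 1/2))^2
        + 3 * ((ww p - 1/2) - round (ww p - 1/2))^2)) := by
  have h0 : p 0 - ctr (cand2 p) 0 = (4/5 : ℝ) * ((uu p - 1/2) - round (uu p - 1/2)) := by
    rw [ctr_zero, p0_eq p]
    unfold cand2
    push_cast
    ring
  have h1 : p 1 - ctr (cand2 p) 1
      = (4/5 : ℝ) * Real.sqrt 3 * ((ww p - 1/2) - round (ww p - 1/2)) := by
    rw [ctr_one, p1_eq p]
    unfold cand2
    push_cast
    ring
  rw [dist2, h0, h1]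
  congr 1
  linear_combination (16/25 : ℝ) * ((ww p - 1/2) - (round (ww p - 1/2) : ℝ))^2 * sqrt3_sq

/-- Core planar inequality, one sign case. -/
lemma core_case (a b : ℝ) (ha1 : 0 ≤ a) (ha2 : a ≤ 1/2) (hb1 : 0 ≤ b) (hb2 : b ≤ 1/2)
    (g1 : 25/64 < a^2 + 3*b^2) (g2 : 25/64 < (a-1/2)^2 + 3*(b-1/2)^2) : False := by
  nlinarith [sq_nonneg (a - 1/2), sq_nonneg a, sq_nonneg (b - 1/4), mul_nonneg ha1 hb1,
    mul_nonneg (sub_nonneg.mpr ha2) (sub_nonneg.mpr hb2),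
    mul_nonneg ha1 (sub_nonneg.mpr hb2), mul_nonneg (sub_nonneg.mpr ha2) hb1]

lemma abs_shift_sq (x : ℝ) :
    ((x - round x) - ((x - 1/2) - round (x - 1/2)))^2 = 1/4 := by
  have h1 : |x - round x| ≤ 1/2 := abs_sub_round x
  have h2 : |(x - 1/2) - round (x - 1/2)| ≤ 1/2 := abs_sub_round (x - 1/2)
  rw [abs_le] at h1 h2
  set k : ℤ := round x - round (x - 1/2) with hk
  have hval : (x - round x) - ((x - 1/2) - round (x - 1/2)) = 1/2 - (k : ℝ) := by
    rw [hk]; push_cast; ring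
  have hkub : (k : ℝ) < 2 := by linarith [hval]
  have hklb : (-1 : ℝ) < (k : ℝ) := by linarith [hval]
  have hk2 : k < 2 := by exact_mod_cast hkub
  have hk1 : (-1 : ℤ) < k := by exact_mod_cast hklb
  interval_cases k <;> rw [hval] <;> push_cast <;> norm_num

/-- Core planar inequality. -/
lemma core (a b a' b' : ℝ) (ha : |a| ≤ 1/2) (hb : |b| ≤ 1/2) (ha' : |a'| ≤ 1/2)
    (hb' : |b'| ≤ 1/2) (h1 : (a - a')^2 = 1/4) (h2 : (b - b')^2 = 1/4) :
    a^2 + 3*b^2 ≤ 25/64 ∨ a'^2 + 3*b'^2 ≤ 25/64 := by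
  by_contra h
  push_neg at h
  obtain ⟨g1, g2⟩ := h
  rw [abs_le] at ha hb ha' hb'
  have e1 : a - a' = 1/2 ∨ a - a' = -(1/2) := by
    have h' : |a - a'| = 1/2 := by
      rw [← Real.sqrt_sq_eq_abs, h1, show (1:ℝ)/4 = (1/2)^2 by norm_num,
        Real.sqrt_sq (by norm_num : (0:ℝ) ≤ 1/2)]
    exact (abs_eq (by norm_num)).mp h'
  have e2 : b - b' = 1/2 ∨ b - b' = -(1/2) := by
    have h' : |b - b'| = 1/2 := by
      rw [← Real.sqrt_sq_eq_abs, h2, show (1:ℝ)/4 = (1/2)^2 by norm_num,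
        Real.sqrt_sq (by norm_num : (0:ℝ) ≤ 1/2)]
    exact (abs_eq (by norm_num)).mp h'
  have ea : a' = a - 1/2 ∨ a' = a + 1/2 := by rcases e1 with e | e; exacts [Or.inl (by linarith), Or.inr (by linarith)]
  have eb : b' = b - 1/2 ∨ b' = b + 1/2 := by rcases e2 with e | e; exacts [Or.inl (by linarith), Or.inr (by linarith)]
  rcases ea with ea | ea <;> rcases eb with eb | eb <;> subst ea <;> subst eb
  · exact core_case a b (by linarith [ha'.1]) ha.2 (by linarith [hb'.1]) hb.2 g1 g2
  · exact core_case a (-b) (by linarith [ha'.1]) ha.2 (by linarith [hb.2])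
      (by linarith [hb'.2]) (by linarith [g1]) (by linarith [g2])
  · exact core_case (-a) b (by linarith [ha.2]) (by linarith [ha'.2]) (by linarith [hb'.1])
      hb.2 (by linarith [g1]) (by linarith [g2])
  · exact core_case (-a) (-b) (by linarith [ha.2]) (by linarith [ha'.2]) (by linarith [hb.2])
      (by linarith [hb'.2]) (by linarith [g1]) (by linarith [g2])

/-- Every point is within distance 1/2 of its assigned center. -/
lemma near (p : EuclideanSpace ℝ (Fin 2)) : dist p (ctr (F p)) ≤ 1/2 := by
  have hcore := core (uu p - round (uu p)) (ww p - round (ww p))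
    ((uu p - 1/2) - round (uu p - 1/2)) ((ww p - 1/2) - round (ww p - 1/2))
    (abs_sub_round _) (abs_sub_round _) (abs_sub_round _) (abs_sub_round _)
    (abs_shift_sq (uu p)) (abs_shift_sq (ww p))
  have hd1 : (uu p - round (uu p))^2 + 3*(ww p - round (ww p))^2 ≤ 25/64 →
      dist p (ctr (cand1 p)) ≤ 1/2 := by
    intro h
    rw [dist_cand1]
    calc Real.sqrt ((16/25) * ((uu p - round (uu p))^2 + 3 * (ww p - round (ww p))^2))
        ≤ Real.sqrt ((1/2)^2) := Real.sqrt_le_sqrt (by nlinarith)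
      _ = 1/2 := Real.sqrt_sq (by norm_num)
  have hd2 : ((uu p - 1/2) - round (uu p - 1/2))^2
      + 3*((ww p - 1/2) - round (ww p - 1/2))^2 ≤ 25/64 →
      dist p (ctr (cand2 p)) ≤ 1/2 := by
    intro h
    rw [dist_cand2]
    calc Real.sqrt ((16/25) * (((uu p - 1/2) - round (uu p - 1/2))^2
          + 3 * ((ww p - 1/2) - round (ww p - 1/2))^2))
        ≤ Real.sqrt ((1/2)^2) := Real.sqrt_le_sqrt (by nlinarith)
      _ = 1/2 := Real.sqrt_sq (by norm_num)
  unfold F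
  split_ifs with hif
  · rcases hcore with h | h
    · exact hd1 h
    · exact le_trans hif (hd2 h)
  · rcases hcore with h | h
    · exact le_trans (not_le.mp hif).le (hd1 h)
    · exact hd2 h

/-- Distinct same-colored centers are more than 2 apart. -/
lemma far {mn mn' : ℤ × ℤ} (hcol : col mn = col mn') (hne : mn ≠ mn') :
    2 < dist (ctr mn) (ctr mn') := by
  obtain ⟨m, n⟩ := mn
  obtain ⟨m', n'⟩ := mn'
  have hmod : ((m + 3*n) % 7).toNat = ((m' + 3*n') % 7).toNat := by
    simpa [col, Fin.mk.injEq] using hcol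
  have hdvd : (7 : ℤ) ∣ (m + 3*n) - (m' + 3*n') := by omega
  obtain ⟨k, hk⟩ := hdvd
  set dm : ℤ := m - m' with hdm
  set dn : ℤ := n - n' with hdn
  have hdmval : dm = 7*k - 3*dn := by omega
  have hne' : ¬(k = 0 ∧ dn = 0) := by
    rintro ⟨rfl, h0⟩
    apply hne
    have hdm0 : dm = 0 := by omega
    simp only [Prod.mk.injEq]
    omega
  have hQ : 7 ≤ dm^2 + dm*dn + dn^2 := by
    have hQe : dm^2 + dm*dn + dn^2 = 7*(7*k^2 - 5*k*dn + dn^2) := by rw [hdmval]; ring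
    rw [hQe]
    have he : 1 ≤ 7*k^2 - 5*k*dn + dn^2 := by
      rcases eq_or_ne k 0 with rfl | hk0
      · have hdn0 : dn ≠ 0 := by tauto
        have h1 : 1 ≤ dn^2 := by rcases hdn0.lt_or_gt with h | h <;> nlinarith
        linarith
      · have h1 : 1 ≤ k^2 := by rcases hk0.lt_or_gt with h | h <;> nlinarith
        by_contra hcon
        push_neg at hcon
        nlinarith [sq_nonneg (2*dn - 5*k)]
    linarith
  have hdist : dist (ctr (m, n)) (ctr (m', n'))
      = Real.sqrt ((16/25) * (((m : ℝ) - m')^2 + ((m : ℝ) - m')*((n : ℝ) - n')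
        + ((n : ℝ) - n')^2)) := by
    rw [dist2, ctr_zero, ctr_zero, ctr_one, ctr_one]
    congr 1
    push_cast
    linear_combination (4/25 : ℝ) * ((n : ℝ) - (n' : ℝ))^2 * sqrt3_sq
  rw [hdist]
  have hQR : (7 : ℝ) ≤ ((m : ℝ) - m')^2 + ((m : ℝ) - m')*((n : ℝ) - n') + ((n : ℝ) - n')^2 := by
    have : ((dm : ℝ))^2 + (dm : ℝ)*(dn : ℝ) + (dn : ℝ)^2
        = ((m : ℝ) - m')^2 + ((m : ℝ) - m')*((n : ℝ) - n') + ((n : ℝ) - n')^2 := by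
      rw [hdm, hdn]; push_cast; ring
    rw [← this]
    exact_mod_cast hQ
  rw [show (2:ℝ) = Real.sqrt 4 by
    rw [show (4:ℝ) = 2^2 by norm_num, Real.sqrt_sq (by norm_num : (0:ℝ) ≤ 2)]]
  apply Real.sqrt_lt_sqrt (by norm_num)
  linarith

end UDG7

/-- Every unit disk graph admits a subcoloring with at most 7 colors. -/
theorem unitDiskGraph_subchromatic_le_seven
    {V : Type*} [Fintype V] (c : V → EuclideanSpace ℝ (Fin 2))
    (G : SimpleGraph V)
    (hG : ∀ u v : V, G.Adj u v ↔ u ≠ v ∧ dist (c u) (c v) ≤ 1) :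
    ∃ μ : V → Fin 7, IsSubcoloring G μ := by
  refine ⟨fun v => UDG7.col (UDG7.F (c v)), ?_⟩
  intro u v w huv hvw hauv havw hne
  have key : ∀ x y : V, UDG7.col (UDG7.F (c x)) = UDG7.col (UDG7.F (c y)) →
      dist (c x) (c y) ≤ 1 → UDG7.F (c x) = UDG7.F (c y) := by
    intro x y hcol hd
    by_contra hFne
    have hfar := UDG7.far hcol hFne
    have htri : dist (UDG7.ctr (UDG7.F (c x))) (UDG7.ctr (UDG7.F (c y)))
        ≤ dist (UDG7.ctr (UDG7.F (c x))) (c x) + dist (c x) (c y)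
          + dist (c y) (UDG7.ctr (UDG7.F (c y))) := dist_triangle4 _ _ _ _
    have h1 := UDG7.near (c x)
    have h2 := UDG7.near (c y)
    rw [dist_comm] at h1
    linarith
  have h1 : UDG7.F (c u) = UDG7.F (c v) := key u v huv ((hG u v).mp hauv).2
  have h2 : UDG7.F (c v) = UDG7.F (c w) := key v w hvw ((hG v w).mp havw).2
  rw [hG]
  refine ⟨hne, ?_⟩
  calc dist (c u) (c w) ≤ dist (c u) (UDG7.ctr (UDG7.F (c u)))
        + dist (UDG7.ctr (UDG7.F (c u))) (c w) := dist_triangle _ _ _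
    _ ≤ 1/2 + 1/2 := by
        refine add_le_add (UDG7.near (c u)) ?_
        rw [h1, h2, dist_comm]
        exact UDG7.near (c w)
    _ = 1 := by norm_num
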